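/- OLS estimation error under exact support: let y = X_S α_S + ε with X/√n satisfying RIP of order s with constant ζ_s < 1, |S| = s, and let α̂ = (X_S^T X_S)^{-1} X_S^T y. Then ‖α̂ - α_S‖₂ ≤ ‖X_S^T ε‖₂ / (n(1 - ζ_s)). In particular, if the entries of X are bounded by X_M and ε has i.i.d. N(0,σ_ε²) entries, then with probability at least 1 - p_b, ‖α̂ - α_S‖₂ ≤ σ_ε X_M √(2 s log(2s/p_b)) / ((1-ζ_s)√n). -/

import Mathlib

open Matrix MeasureTheory ProbabilityTheory

noncomputable def norm2 {n : ℕ} (v : Fin n → ℝ) : ℝ := Real.sqrt (∑ i, v i ^ 2)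

def IsRIP {n p : ℕ} (X : Matrix (Fin n) (Fin p) ℝ) (K : ℕ) (ζ : ℝ) : Prop :=
  ∀ v : Fin p → ℝ, (Finset.univ.filter (fun i => v i ≠ 0)).card ≤ K →
    (1 - ζ) * norm2 v ^ 2 ≤ norm2 (X.mulVec v) ^ 2 ∧
      norm2 (X.mulVec v) ^ 2 ≤ (1 + ζ) * norm2 v ^ 2

/-!
Restricted to the columns in `S`, RIP bounds the Gram matrix `X_Sᵀ X_S` below by `n (1 - ζ)`:
`n (1 - ζ) ‖w‖² ≤ ‖X_S w‖² = ⟪w, X_Sᵀ X_S w⟫ ≤ ‖w‖ ‖X_Sᵀ X_S w‖`. Hence `X_Sᵀ X_S` is invertible,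
its inverse shrinks norms by `n (1 - ζ)`, and `α̂ - α_S = (X_Sᵀ X_S)⁻¹ X_Sᵀ ε` gives the
deterministic bound.

Each coordinate of `X_Sᵀ ε` is a linear combination of independent centred Gaussians, hence
sub-Gaussian with variance proxy at most `σ_ε² n X_M²`. The Chernoff bound and a union bound over
the `2 s` one-sided tails show that with probability at least `1 - p_b` every coordinate is at most
`σ_ε X_M √(2 n log (2 s / p_b))` in absolute value, so that
`‖X_Sᵀ ε‖₂ ≤ σ_ε X_M √(2 s n log (2 s / p_b))`.
-/

open scoped NNReal

lemma norm2_eq_norm {n : ℕ} (v : Fin n → ℝ) :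
    norm2 v = ‖(WithLp.toLp 2 v : EuclideanSpace ℝ (Fin n))‖ := by
  simp [norm2, EuclideanSpace.norm_eq]

lemma norm2_nonneg {n : ℕ} (v : Fin n → ℝ) : 0 ≤ norm2 v := by
  simp [norm2_eq_norm]

lemma norm2_eq_zero {n : ℕ} {v : Fin n → ℝ} : norm2 v = 0 ↔ v = 0 := by
  simp [norm2_eq_norm]

lemma norm2_sq {n : ℕ} (v : Fin n → ℝ) : norm2 v ^ 2 = v ⬝ᵥ v := by
  rw [norm2, Real.sq_sqrt (by positivity)]
  simp [dotProduct, sq]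

lemma norm2_smul {n : ℕ} (a : ℝ) (v : Fin n → ℝ) : norm2 (a • v) = |a| * norm2 v := by
  simp [norm2_eq_norm, WithLp.toLp_smul, norm_smul]

lemma dotProduct_le_norm2_mul_norm2 {n : ℕ} (v w : Fin n → ℝ) :
    v ⬝ᵥ w ≤ norm2 v * norm2 w := by
  simpa [norm2_eq_norm, EuclideanSpace.inner_toLp_toLp, dotProduct_comm] using
    real_inner_le_norm (WithLp.toLp 2 v : EuclideanSpace ℝ (Fin n)) (WithLp.toLp 2 w)

lemma norm2_le_sqrt_card_mul {n : ℕ} {v : Fin n → ℝ} {t : ℝ} (ht : 0 ≤ t)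
    (hv : ∀ i, |v i| ≤ t) : norm2 v ≤ Real.sqrt n * t := by
  rw [← Real.sqrt_sq ht, ← Real.sqrt_mul (Nat.cast_nonneg n), norm2]
  refine Real.sqrt_le_sqrt ?_
  simpa using Finset.sum_le_sum (s := Finset.univ) fun i _ =>
    sq_le_sq' (abs_le.mp (hv i)).1 (abs_le.mp (hv i)).2

@[fun_prop]
lemma continuous_norm2 {n : ℕ} : Continuous (norm2 : (Fin n → ℝ) → ℝ) := by
  unfold norm2; fun_prop

section Gram

variable {m k : ℕ} {A : Matrix (Fin m) (Fin k) ℝ} {c : ℝ}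

lemma dotProduct_transpose_mul_self_mulVec (A : Matrix (Fin m) (Fin k) ℝ) (w : Fin k → ℝ) :
    w ⬝ᵥ (Aᵀ * A) *ᵥ w = norm2 (A *ᵥ w) ^ 2 := by
  rw [norm2_sq, ← mulVec_mulVec, dotProduct_mulVec, vecMul_transpose]

lemma norm2_le_norm2_transpose_mul_self_mulVec (hc : 0 < c)
    (hA : ∀ v, c * norm2 v ^ 2 ≤ norm2 (A *ᵥ v) ^ 2) (w : Fin k → ℝ) :
    norm2 w ≤ norm2 ((Aᵀ * A) *ᵥ w) / c := by
  have h : c * norm2 w ^ 2 ≤ norm2 w * norm2 ((Aᵀ * A) *ᵥ w) :=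
    calc c * norm2 w ^ 2 ≤ norm2 (A *ᵥ w) ^ 2 := hA w
      _ = w ⬝ᵥ (Aᵀ * A) *ᵥ w := (dotProduct_transpose_mul_self_mulVec A w).symm
      _ ≤ norm2 w * norm2 ((Aᵀ * A) *ᵥ w) := dotProduct_le_norm2_mul_norm2 _ _
  rw [le_div_iff₀ hc]
  nlinarith [norm2_nonneg w, norm2_nonneg ((Aᵀ * A) *ᵥ w)]

lemma isUnit_det_transpose_mul_self (hc : 0 < c)
    (hA : ∀ v, c * norm2 v ^ 2 ≤ norm2 (A *ᵥ v) ^ 2) : IsUnit (Aᵀ * A).det := by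
  refine (isUnit_iff_isUnit_det _).mp (mulVec_injective_iff_isUnit.mp fun w₁ w₂ h => ?_)
  have h0 := norm2_le_norm2_transpose_mul_self_mulVec hc hA (w₁ - w₂)
  have : norm2 (w₁ - w₂) = 0 :=
    le_antisymm (by simpa [mulVec_sub, h, norm2] using h0) (norm2_nonneg _)
  exact sub_eq_zero.mp (norm2_eq_zero.mp this)

lemma norm2_inv_transpose_mul_self_mulVec_le (hc : 0 < c)
    (hA : ∀ v, c * norm2 v ^ 2 ≤ norm2 (A *ᵥ v) ^ 2) (u : Fin k → ℝ) :
    norm2 ((Aᵀ * A)⁻¹ *ᵥ u) ≤ norm2 u / c := by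
  simpa [mulVec_mulVec, mul_nonsing_inv _ (isUnit_det_transpose_mul_self hc hA)] using
    norm2_le_norm2_transpose_mul_self_mulVec hc hA ((Aᵀ * A)⁻¹ *ᵥ u)

lemma inv_transpose_mul_self_mulVec_sub (hA : IsUnit (Aᵀ * A).det) (a : Fin k → ℝ)
    (z : Fin m → ℝ) :
    (Aᵀ * A)⁻¹ *ᵥ (Aᵀ *ᵥ (A *ᵥ a + z)) - a = (Aᵀ * A)⁻¹ *ᵥ (Aᵀ *ᵥ z) := by
  rw [mulVec_add, mulVec_mulVec, mulVec_add, mulVec_mulVec, nonsing_inv_mul _ hA, one_mulVec,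
    add_sub_cancel_left]

end Gram

lemma IsRIP.lower_bound_submatrix {n p k K : ℕ} {X : Matrix (Fin n) (Fin p) ℝ} {ζ : ℝ}
    (hX : IsRIP X K ζ) {e : Fin k → Fin p} (he : Function.Injective e) (hk : k ≤ K)
    (v : Fin k → ℝ) : (1 - ζ) * norm2 v ^ 2 ≤ norm2 (X.submatrix id e *ᵥ v) ^ 2 := by
  classical
  set w : Fin p → ℝ := Function.extend e v 0
  have hwe : ∀ i, w (e i) = v i := he.extend_apply v 0
  have hw : ∀ j ∉ Set.range e, w j = 0 := fun j hj => Function.extend_apply' _ _ _ hj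
  have hsupp : (Finset.univ.filter fun j => w j ≠ 0).card ≤ K := by
    refine (Finset.card_le_card (t := Finset.univ.image e) fun j hj => ?_).trans
      (Finset.card_image_le.trans (by simpa using hk))
    obtain ⟨i, rfl⟩ := not_imp_comm.mp (hw j) (Finset.mem_filter.mp hj).2
    exact Finset.mem_image_of_mem e (Finset.mem_univ i)
  have hnorm : norm2 w = norm2 v := by
    rw [norm2, norm2, Fintype.sum_of_injective e he (fun i => v i ^ 2) (fun j => w j ^ 2)
      (fun j hj => by simp [hw j hj]) (fun i => by simp [hwe])]
  have hmul : X *ᵥ w = X.submatrix id e *ᵥ v := by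
    ext i
    simp only [mulVec, dotProduct, submatrix_apply, id]
    exact (Fintype.sum_of_injective e he _ _ (fun j hj => by simp [hw j hj])
      (fun j => by simp [hwe])).symm
  simpa [hnorm, hmul] using (hX w hsupp).1

lemma IsRIP.lower_bound_submatrix_of_inv_sqrt_smul {n p k K : ℕ} (hn : 0 < n)
    {X : Matrix (Fin n) (Fin p) ℝ} {ζ : ℝ} (hX : IsRIP ((1 / Real.sqrt n) • X) K ζ)
    {e : Fin k → Fin p} (he : Function.Injective e) (hk : k ≤ K) (v : Fin k → ℝ) :
    n * (1 - ζ) * norm2 v ^ 2 ≤ norm2 (X.submatrix id e *ᵥ v) ^ 2 := by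
  have hn' : (0 : ℝ) < n := Nat.cast_pos.mpr hn
  have h := hX.lower_bound_submatrix he hk v
  rw [show ((1 / Real.sqrt n) • X).submatrix id e = (1 / Real.sqrt n) • X.submatrix id e from rfl,
    smul_mulVec, norm2_smul, mul_pow, sq_abs, div_pow, one_pow, Real.sq_sqrt hn'.le] at h
  calc n * (1 - ζ) * norm2 v ^ 2 = n * ((1 - ζ) * norm2 v ^ 2) := mul_assoc _ _ _
    _ ≤ n * (1 / n * norm2 (X.submatrix id e *ᵥ v) ^ 2) := by gcongr
    _ = norm2 (X.submatrix id e *ᵥ v) ^ 2 := by field_simp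

lemma ProbabilityTheory.HasSubgaussianMGF.mono {Ω : Type*} [MeasurableSpace Ω] {μ : Measure Ω}
    {Y : Ω → ℝ} {c d : ℝ≥0} (h : HasSubgaussianMGF Y c μ) (hcd : c ≤ d) :
    HasSubgaussianMGF Y d μ :=
  ⟨h.integrable_exp_mul, fun t => (h.mgf_le t).trans (Real.exp_le_exp.mpr (by gcongr))⟩

section GaussianVector

variable {ι : Type*} [Fintype ι]

lemma hasSubgaussianMGF_const_mul_gaussianReal (v : ℝ≥0) (a : ℝ) :
    HasSubgaussianMGF (a * ·) (⟨a ^ 2, sq_nonneg a⟩ * v) (gaussianReal 0 v) := by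
  rw [← HasSubgaussianMGF.id_map_iff (by fun_prop), gaussianReal_map_const_mul, mul_zero]
  refine ⟨integrable_exp_mul_gaussianReal, fun t => le_of_eq ?_⟩
  simp only [mgf_id_gaussianReal, zero_mul, zero_add]
  rfl

lemma hasSubgaussianMGF_sum_mul_pi_gaussianReal (v : ℝ≥0) (c : ι → ℝ) :
    HasSubgaussianMGF (fun x => ∑ i, c i * x i) (∑ i, ⟨c i ^ 2, sq_nonneg (c i)⟩ * v)
      (Measure.pi fun _ : ι => gaussianReal 0 v) :=
  HasSubgaussianMGF.sum_of_iIndepFun (iIndepFun_pi fun i => by fun_prop) fun i _ =>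
    .of_map (measurable_pi_apply i).aemeasurable <| by
      rw [(measurePreserving_eval _ i).map_eq]
      exact hasSubgaussianMGF_const_mul_gaussianReal v (c i)

lemma measure_lt_abs_sum_mul_pi_gaussianReal_le {v : ℝ≥0} (c : ι → ℝ) {W : ℝ}
    (hW : v * ∑ i, c i ^ 2 ≤ W) {t : ℝ} (ht : 0 ≤ t) :
    (Measure.pi fun _ : ι => gaussianReal 0 v) {x | t < |∑ i, c i * x i|}
      ≤ ENNReal.ofReal (2 * Real.exp (-t ^ 2 / (2 * W))) := by
  set μ := Measure.pi fun _ : ι => gaussianReal 0 v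
  have hW0 : 0 ≤ W := le_trans (by positivity) hW
  have tail : ∀ d : ι → ℝ, ∑ i, d i ^ 2 = ∑ i, c i ^ 2 →
      μ {x | t ≤ ∑ i, d i * x i} ≤ ENNReal.ofReal (Real.exp (-t ^ 2 / (2 * W))) := by
    intro d hd
    have hparam : ∑ i, (⟨d i ^ 2, sq_nonneg (d i)⟩ * v : ℝ≥0) ≤ W.toNNReal := by
      rw [← NNReal.coe_le_coe, NNReal.coe_sum, Real.coe_toNNReal _ hW0]
      refine le_of_eq_of_le ?_ hW
      rw [← hd, Finset.mul_sum]
      exact Finset.sum_congr rfl fun i _ => mul_comm _ _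
    have h := ((hasSubgaussianMGF_sum_mul_pi_gaussianReal v d).mono hparam).measure_ge_le ht
    rw [Real.coe_toNNReal _ hW0] at h
    rw [← ofReal_measureReal]
    exact ENNReal.ofReal_le_ofReal h
  have hsub : {x : ι → ℝ | t < |∑ i, c i * x i|}
      ⊆ {x : ι → ℝ | t ≤ ∑ i, c i * x i} ∪ {x : ι → ℝ | t ≤ ∑ i, (-c) i * x i} := by
    intro x (hx : t < |_|)
    rcases lt_abs.mp hx with h | h
    · exact Or.inl h.le
    · exact Or.inr (by simpa [Finset.sum_neg_distrib] using h.le)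
  calc μ {x | t < |∑ i, c i * x i|}
      ≤ μ {x | t ≤ ∑ i, c i * x i} + μ {x | t ≤ ∑ i, (-c) i * x i} :=
        (measure_mono hsub).trans (measure_union_le _ _)
    _ ≤ ENNReal.ofReal (Real.exp (-t ^ 2 / (2 * W)))
          + ENNReal.ofReal (Real.exp (-t ^ 2 / (2 * W))) :=
        add_le_add (tail c rfl) (tail (-c) (by simp))
    _ = ENNReal.ofReal (2 * Real.exp (-t ^ 2 / (2 * W))) := by
        rw [← ENNReal.ofReal_add (by positivity) (by positivity), ← two_mul]

end GaussianVector

lemma transpose_mulVec_apply {n s : ℕ} (M : Matrix (Fin n) (Fin s) ℝ) (x : Fin n → ℝ)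
    (j : Fin s) : (Mᵀ *ᵥ x) j = ∑ i, M i j * x i := by
  simp [mulVec, dotProduct]

section GaussianDesign

variable {n s : ℕ} {M : Matrix (Fin n) (Fin s) ℝ} {B : ℝ} {v : ℝ≥0}

lemma pi_gaussianReal_lt_abs_transpose_mulVec_apply_le (hM : ∀ i j, |M i j| ≤ B) (hB : 0 < B)
    (hn : 0 < n) (hv : 0 < v) {R : ℝ} (hR : 1 < R) (j : Fin s) :
    (Measure.pi fun _ : Fin n => gaussianReal 0 v)
        {x | Real.sqrt v * B * Real.sqrt n * Real.sqrt (2 * Real.log R) < |(Mᵀ *ᵥ x) j|}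
      ≤ ENNReal.ofReal (2 / R) := by
  have hW : (v : ℝ) * ∑ i, M i j ^ 2 ≤ v * (n * B ^ 2) := by
    gcongr
    simpa using Finset.sum_le_sum (s := Finset.univ) fun i _ =>
      sq_le_sq' (abs_le.mp (hM i j)).1 (abs_le.mp (hM i j)).2
  have hlog : (Real.sqrt v * B * Real.sqrt n * Real.sqrt (2 * Real.log R)) ^ 2
      / (2 * (v * (n * B ^ 2))) = Real.log R := by
    rw [mul_pow, mul_pow, mul_pow, Real.sq_sqrt v.coe_nonneg, Real.sq_sqrt (Nat.cast_nonneg n),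
      Real.sq_sqrt (mul_nonneg zero_le_two (Real.log_pos hR).le)]
    field_simp
  have h := measure_lt_abs_sum_mul_pi_gaussianReal_le (fun i => M i j) hW
    (t := Real.sqrt v * B * Real.sqrt n * Real.sqrt (2 * Real.log R)) (by positivity)
  simp_rw [transpose_mulVec_apply]
  rwa [neg_div, hlog, Real.exp_neg, Real.exp_log (by positivity), ← div_eq_mul_inv] at h

lemma one_sub_le_pi_gaussianReal_norm2_transpose_mulVec_le (hM : ∀ i j, |M i j| ≤ B)
    (hv : 0 < v) {δ : ℝ} (hδ0 : 0 < δ) (hδ1 : δ < 1) :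
    1 - ENNReal.ofReal δ ≤ (Measure.pi fun _ : Fin n => gaussianReal 0 v) {x | norm2 (Mᵀ *ᵥ x)
      ≤ Real.sqrt v * B * Real.sqrt (2 * s * Real.log (2 * s / δ)) * Real.sqrt n} := by
  set μ := Measure.pi fun _ : Fin n => gaussianReal 0 v
  set R := 2 * s / δ
  rcases eq_or_ne M 0 with rfl | hM0
  · have hbound : 0 ≤ Real.sqrt v * B * Real.sqrt (2 * s * Real.log R) * Real.sqrt n := by
      rcases Nat.eq_zero_or_pos n with rfl | hn
      · simp
      rcases Nat.eq_zero_or_pos s with rfl | hs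
      · simp
      have := (abs_nonneg _).trans (hM ⟨0, hn⟩ ⟨0, hs⟩)
      positivity
    have hall : {x : Fin n → ℝ | norm2 ((0 : Matrix (Fin n) (Fin s) ℝ)ᵀ *ᵥ x)
        ≤ Real.sqrt v * B * Real.sqrt (2 * s * Real.log R) * Real.sqrt n} = Set.univ :=
      Set.eq_univ_of_forall fun x => by simpa [norm2] using hbound
    rw [hall, measure_univ]
    exact tsub_le_self
  obtain ⟨i₀, j₀, hM₀⟩ : ∃ i j, M i j ≠ 0 := by
    by_contra! h
    exact hM0 (Matrix.ext h)
  have hB : 0 < B := (abs_pos.mpr hM₀).trans_le (hM i₀ j₀)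
  have hs : (0 : ℝ) < s := Nat.cast_pos.mpr (Fin.pos j₀)
  have hR : 1 < R := by
    rw [lt_div_iff₀ hδ0]
    have : (1 : ℝ) ≤ s := Nat.one_le_cast.mpr (Fin.pos j₀)
    linarith
  set t := Real.sqrt v * B * Real.sqrt n * Real.sqrt (2 * Real.log R)
  set bad := {x : Fin n → ℝ | ∃ j, t < |(Mᵀ *ᵥ x) j|}
  have hbad : μ bad ≤ ENNReal.ofReal δ :=
    calc μ bad ≤ ∑ j, μ {x | t < |(Mᵀ *ᵥ x) j|} := by
          simp only [bad, Set.ofPred_exists]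
          exact measure_iUnion_fintype_le _ _
      _ ≤ ∑ _j : Fin s, ENNReal.ofReal (2 / R) := Finset.sum_le_sum fun j _ =>
          pi_gaussianReal_lt_abs_transpose_mulVec_apply_le hM hB (Fin.pos i₀) hv hR j
      _ = ENNReal.ofReal δ := by
          rw [Finset.sum_const, Finset.card_univ, Fintype.card_fin, nsmul_eq_mul,
            ← ENNReal.ofReal_natCast, ← ENNReal.ofReal_mul (Nat.cast_nonneg s)]
          congr 1
          simp only [R]
          field_simp
  have hgood : badᶜ ⊆ {x | norm2 (Mᵀ *ᵥ x)
      ≤ Real.sqrt v * B * Real.sqrt (2 * s * Real.log R) * Real.sqrt n} := by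
    intro x hx
    simp only [bad, Set.mem_compl_iff, Set.mem_ofPred_eq, not_exists, not_lt] at hx
    refine (norm2_le_sqrt_card_mul (by positivity) hx).trans_eq ?_
    rw [show 2 * (s : ℝ) * Real.log R = s * (2 * Real.log R) by ring,
      Real.sqrt_mul (Nat.cast_nonneg s)]
    ring
  rw [tsub_le_iff_right]
  calc 1 = μ Set.univ := measure_univ.symm
    _ ≤ μ badᶜ + μ bad := by
        rw [add_comm]
        exact measure_univ_le_add_compl _
    _ ≤ _ := add_le_add (measure_mono hgood) hbad

end GaussianDesign

theorem ols_estimation_error_general {Ω : Type*} [MeasurableSpace Ω] (P : Measure Ω)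
    [IsProbabilityMeasure P] {n p s : ℕ} (hn : 0 < n)
    (X : Matrix (Fin n) (Fin p) ℝ) (XM : ℝ) (hXM : ∀ i j, |X i j| ≤ XM)
    (e : Fin s → Fin p) (he : Function.Injective e)
    (ζ : ℝ) (hζ1 : ζ < 1)
    (hRIP : IsRIP ((1 / Real.sqrt n) • X) s ζ)
    (αS : Fin s → ℝ)
    (ε : Ω → Fin n → ℝ) (hmeas : Measurable ε) (σε : ℝ) (hσ : 0 < σε)
    (hlaw : Measure.map ε P =
      Measure.pi (fun _ : Fin n => gaussianReal 0 ⟨σε ^ 2, sq_nonneg σε⟩))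
    (p_b : ℝ) (hp0 : 0 < p_b) (hp1 : p_b < 1)
    (αhat : Ω → Fin s → ℝ)
    (hαhat : ∀ ω, αhat ω = (((X.submatrix id e)ᵀ * X.submatrix id e)⁻¹).mulVec
        ((X.submatrix id e)ᵀ.mulVec ((X.submatrix id e).mulVec αS + ε ω))) :
    (∀ ω, norm2 (αhat ω - αS) ≤
        norm2 ((X.submatrix id e)ᵀ.mulVec (ε ω)) / (n * (1 - ζ))) ∧
    1 - ENNReal.ofReal p_b ≤
      P {ω | norm2 (αhat ω - αS) ≤
        σε * XM * Real.sqrt (2 * s * Real.log (2 * s / p_b)) / ((1 - ζ) * Real.sqrt n)} := by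
  set XS := X.submatrix id e
  have hn' : (0 : ℝ) < n := Nat.cast_pos.mpr hn
  have hc : 0 < n * (1 - ζ) := mul_pos hn' (sub_pos.mpr hζ1)
  have hlow := hRIP.lower_bound_submatrix_of_inv_sqrt_smul hn he le_rfl
  have herr : ∀ ω, norm2 (αhat ω - αS) ≤ norm2 (XSᵀ *ᵥ ε ω) / (n * (1 - ζ)) := fun ω => by
    rw [hαhat ω, inv_transpose_mul_self_mulVec_sub (isUnit_det_transpose_mul_self hc hlow)]
    exact norm2_inv_transpose_mul_self_mulVec_le hc hlow _
  refine ⟨herr, ?_⟩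
  set v : ℝ≥0 := ⟨σε ^ 2, sq_nonneg σε⟩
  have hv : Real.sqrt v = σε := Real.sqrt_sq hσ.le
  have hgauss := one_sub_le_pi_gaussianReal_norm2_transpose_mulVec_le (M := XS)
    (fun i j => hXM i (e j)) (NNReal.coe_pos.mp (pow_pos hσ 2) : 0 < v) hp0 hp1
  rw [← hlaw, Measure.map_apply hmeas (measurableSet_le (by fun_prop) measurable_const), hv]
    at hgauss
  refine hgauss.trans (measure_mono fun ω (hω : norm2 (XSᵀ *ᵥ ε ω) ≤ _) => ?_)
  calc norm2 (αhat ω - αS) ≤ norm2 (XSᵀ *ᵥ ε ω) / (n * (1 - ζ)) := herr ω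
    _ ≤ σε * XM * Real.sqrt (2 * s * Real.log (2 * s / p_b)) * Real.sqrt n / (n * (1 - ζ)) := by
        gcongr
    _ = σε * XM * Real.sqrt (2 * s * Real.log (2 * s / p_b)) / ((1 - ζ) * Real.sqrt n) := by
        rw [div_eq_div_iff hc.ne' (by positivity)]
        linear_combination σε * XM * Real.sqrt (2 * s * Real.log (2 * s / p_b)) * (1 - ζ) *
          Real.mul_self_sqrt hn'.le

/-- OLS estimation error under exact support: with `y = X_S α_S + ε`, RIP of order `s` for
`X/√n` with constant `ζ < 1`, and `α̂ = (X_Sᵀ X_S)⁻¹ X_Sᵀ y`: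
(i) `‖α̂ - α_S‖₂ ≤ ‖X_Sᵀ ε‖₂ / (n(1-ζ))`;
(ii) if the entries of `X` are bounded by `X_M` and `ε` has i.i.d. `N(0, σ_ε²)` entries,
then with probability at least `1 - p_b`,
`‖α̂ - α_S‖₂ ≤ σ_ε X_M √(2 s log(2s/p_b)) / ((1-ζ)√n)`. -/
theorem ols_estimation_error {Ω : Type*} [MeasurableSpace Ω] (P : Measure Ω)
    [IsProbabilityMeasure P] {n p s : ℕ} (hn : 0 < n)
    (X : Matrix (Fin n) (Fin p) ℝ) (XM : ℝ) (hXM : ∀ i j, |X i j| ≤ XM)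
    (e : Fin s → Fin p) (he : Function.Injective e)
    (ζ : ℝ) (hζ0 : 0 ≤ ζ) (hζ1 : ζ < 1)
    (hRIP : IsRIP ((1 / Real.sqrt n) • X) s ζ)
    (αS : Fin s → ℝ)
    (ε : Ω → Fin n → ℝ) (hmeas : Measurable ε) (σε : ℝ) (hσ : 0 < σε)
    (hlaw : Measure.map ε P =
      Measure.pi (fun _ : Fin n => gaussianReal 0 ⟨σε ^ 2, sq_nonneg σε⟩))
    (p_b : ℝ) (hp0 : 0 < p_b) (hp1 : p_b < 1)
    (αhat : Ω → Fin s → ℝ)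
    (hαhat : ∀ ω, αhat ω = (((X.submatrix id e)ᵀ * X.submatrix id e)⁻¹).mulVec
        ((X.submatrix id e)ᵀ.mulVec ((X.submatrix id e).mulVec αS + ε ω))) :
    (∀ ω, norm2 (αhat ω - αS) ≤
        norm2 ((X.submatrix id e)ᵀ.mulVec (ε ω)) / (n * (1 - ζ))) ∧
    1 - ENNReal.ofReal p_b ≤
      P {ω | norm2 (αhat ω - αS) ≤
        σε * XM * Real.sqrt (2 * s * Real.log (2 * s / p_b)) / ((1 - ζ) * Real.sqrt n)} :=
  ols_estimation_error_general P hn X XM hXM e he ζ hζ1 hRIP αS ε hmeas σε hσ hlaw p_b hp0 hp1 αhat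
    hαhat
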